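/- If a list of the form X ++ [i, i'] ++ Y satisfies E(X ++ [i, i'] ++ Y) ≥ E(X ++ [i', i] ++ Y) and the continuation probability q(X) of the prefix X is strictly positive, then e_i(1 − q_{i'}) ≥ e_{i'}(1 − q_i). -/

import Mathlib

noncomputable section

/-- Efficiency of an ordered list of ads `(e, q)`. -/
def eff : List (ℝ × ℝ) → ℝ
  | [] => 0
  | a :: L => a.1 + a.2 * eff L

/-- Product of continuation probabilities of a list of ads. -/
def qprod (L : List (ℝ × ℝ)) : ℝ := (L.map Prod.snd).prod

/-! An adjacent swap changes the efficiency by the continuation probability of the prefix times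
a quantity depending only on the two swapped ads: the tail is reached with probability `q q'`
in either order. -/

theorem eff_append (X L : List (ℝ × ℝ)) :
    eff (X ++ L) = eff X + qprod X * eff L := by
  induction X with
  | nil => simp [eff, qprod]
  | cons a X ih =>
    simp only [List.cons_append, eff, ih, qprod, List.map_cons, List.prod_cons]
    ring

theorem eff_cons_cons_sub_eff_swap (a b : ℝ × ℝ) (L : List (ℝ × ℝ)) :
    eff (a :: b :: L) - eff (b :: a :: L) = a.1 * (1 - b.2) - b.1 * (1 - a.2) := by
  simp only [eff]
  ring

theorem eff_sub_eff_adjacent_swap (X Y : List (ℝ × ℝ)) (a b : ℝ × ℝ) :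
    eff (X ++ [a, b] ++ Y) - eff (X ++ [b, a] ++ Y) =
      qprod X * (a.1 * (1 - b.2) - b.1 * (1 - a.2)) := by
  simp only [List.append_assoc, List.cons_append, List.nil_append, eff_append]
  rw [← eff_cons_cons_sub_eff_swap a b Y]
  ring

theorem rank_inequality_of_optimal_order_general
    (X Y : List (ℝ × ℝ)) (i i' : ℝ × ℝ)
    (hqX : 0 < qprod X)
    (hopt : eff (X ++ [i, i'] ++ Y) ≥ eff (X ++ [i', i] ++ Y)) :
    i.1 * (1 - i'.2) ≥ i'.1 * (1 - i.2) := by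
  have hswap : 0 ≤ qprod X * (i.1 * (1 - i'.2) - i'.1 * (1 - i.2)) := by
    rw [← eff_sub_eff_adjacent_swap]
    exact sub_nonneg.mpr hopt
  exact sub_nonneg.mp (nonneg_of_mul_nonneg_right hswap hqX)

/-- If keeping `i` before `i'` is at least as efficient as swapping them, and the
continuation probability of the prefix is positive, then `e_i(1−q_{i'}) ≥ e_{i'}(1−q_i)`. -/
theorem rank_inequality_of_optimal_order
    (X Y : List (ℝ × ℝ)) (i i' : ℝ × ℝ)
    (hi : 0 ≤ i.1 ∧ 0 ≤ i.2 ∧ i.2 ≤ 1)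
    (hi' : 0 ≤ i'.1 ∧ 0 ≤ i'.2 ∧ i'.2 ≤ 1)
    (hX : ∀ a ∈ X, 0 ≤ a.1 ∧ 0 ≤ a.2 ∧ a.2 ≤ 1)
    (hY : ∀ a ∈ Y, 0 ≤ a.1 ∧ 0 ≤ a.2 ∧ a.2 ≤ 1)
    (hqX : 0 < qprod X)
    (hopt : eff (X ++ [i, i'] ++ Y) ≥ eff (X ++ [i', i] ++ Y)) :
    i.1 * (1 - i'.2) ≥ i'.1 * (1 - i.2) :=
  rank_inequality_of_optimal_order_general X Y i i' hqX hopt
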